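/- For every integer n ≥ 102, f_{2n+1}(n−2, n−2) = (64n³ + 30n² − 13n − 3)/(128n³ − 32n). (This is the case m = 5, α = −2 of the closed form for values five steps below the top diagonal.) -/

import Mathlib

/-!
Backward induction over the 21 states reachable from `(n - 2, n - 2)` before the horizon
`2 * n + 1`. A state with `N ≤ 2 t` is worth `1 / 2`, since no continuation ever shows a head
proportion above `1 / 2`. At every other state, comparing the continuation value with the stopping
value `h / (h + t)` gives the same decision for all `n ≥ 12`, so each value is a single rational
function of `n`.
-/

/-- Auxiliary backward-induction for the truncated Chow–Robbins value.
The first argument is the remaining number of tosses `N - (h + t)`. -/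
def crAux : ℕ → ℕ → ℕ → ℕ → ℚ
  | 0, N, h, _t => max (1/2) ((h : ℚ) / (N : ℚ))
  | k+1, N, h, t =>
      max ((crAux k N (h+1) t + crAux k N h (t+1)) / 2) ((h : ℚ) / ((h : ℚ) + (t : ℚ)))

/-- `cr N h t` is the truncated Chow–Robbins value `f_N(h,t)`:
the optimal expected reward of the coin-tossing game truncated at `N` tosses,
starting with `h` heads and `t` tails. -/
def cr (N h t : ℕ) : ℚ := crAux (N - (h + t)) N h t

theorem cr_of_add_eq {N h t : ℕ} (hsum : h + t = N) :
    cr N h t = max (1 / 2) ((h : ℚ) / N) := by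
  subst hsum
  simp [cr, crAux]

theorem cr_of_add_lt {N h t : ℕ} (hlt : h + t < N) :
    cr N h t = max ((cr N (h + 1) t + cr N h (t + 1)) / 2) ((h : ℚ) / (h + t)) := by
  obtain ⟨k, hk⟩ : ∃ k, N - (h + t) = k + 1 := ⟨N - (h + t) - 1, by omega⟩
  have hh : N - (h + 1 + t) = k := by omega
  have ht : N - (h + (t + 1)) = k := by omega
  simp only [cr, hk, hh, ht, crAux]

theorem cr_eq_ratio_of_add_eq {N h t : ℕ} (hsum : h + t = N) (hlt : N < 2 * h) :
    cr N h t = h / N := by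
  rw [cr_of_add_eq hsum, max_eq_right]
  rw [div_le_div_iff₀ two_pos (by exact_mod_cast (by omega : 0 < N))]
  exact_mod_cast (by omega : 1 * N ≤ h * 2)

theorem cr_eq_half_of_le_two_mul {N h t : ℕ} (hle : h + t ≤ N) (ht : N ≤ 2 * t) :
    cr N h t = 1 / 2 := by
  induction hd : N - (h + t) generalizing h t with
  | zero =>
    rw [cr_of_add_eq (by omega), max_eq_left]
    rcases Nat.eq_zero_or_pos N with rfl | hN
    · simp
    · rw [div_le_div_iff₀ (by exact_mod_cast hN) two_pos]
      exact_mod_cast (by omega : h * 2 ≤ 1 * N)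
  | succ d ih =>
    rw [cr_of_add_lt (by omega), ih (by omega) (by omega) (by omega),
      ih (by omega) (by omega) (by omega), add_halves, max_eq_left]
    have hpos : (0 : ℚ) < h + t := by exact_mod_cast (by omega : 0 < h + t)
    rw [div_le_div_iff₀ hpos two_pos]
    exact_mod_cast (by omega : h * 2 ≤ 1 * (h + t))

theorem cr_eq_of_continue {N h t : ℕ} {a b v : ℚ} (hlt : h + t < N) (ha : cr N (h + 1) t = a)
    (hb : cr N h (t + 1) = b) (hv : (a + b) / 2 = v) (hstop : (h : ℚ) / (h + t) ≤ v) :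
    cr N h t = v := by
  rw [cr_of_add_lt hlt, ha, hb, hv, max_eq_left hstop]

theorem cr_eq_of_stop {N h t : ℕ} {a b v : ℚ} (hlt : h + t < N) (ha : cr N (h + 1) t = a)
    (hb : cr N h (t + 1) = b) (hv : (h : ℚ) / (h + t) = v) (hcont : (a + b) / 2 ≤ v) :
    cr N h t = v := by
  rw [cr_of_add_lt hlt, ha, hb, hv, max_eq_right hcont]

/-! `cr_at_i_j` is the value with `n - 2 + i` heads and `n - 2 + j` tails, `5 - i - j` tosses
before the horizon `2 * n + 1`. -/

theorem cr_at_2_2 {n h t : ℕ} (hh : h = n) (ht : t = n) :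
    cr (2 * n + 1) h t = (4 * n + 3) / (8 * n + 4) := by
  subst hh ht
  refine cr_eq_of_continue (by omega) (cr_eq_ratio_of_add_eq (by omega) (by omega))
    (cr_eq_half_of_le_two_mul (by omega) (by omega)) ?_ ?_
  · push_cast
    rw [div_add_div _ _ (by positivity) two_ne_zero, div_div,
      div_eq_div_iff (by positivity) (by positivity)]
    ring
  · apply div_le_of_le_mul₀ (by positivity) (by positivity)
    rw [div_mul_eq_mul_div, le_div_iff₀ (by positivity)]
    nlinarith

theorem cr_at_3_1 {n h t : ℕ} (hh : h = n + 1) (ht : t + 1 = n) :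
    cr (2 * n + 1) h t = (n + 1) / (2 * n) := by
  have hn : (1 : ℚ) ≤ n := by exact_mod_cast (by omega : 1 ≤ n)
  have hq : (h : ℚ) = n + 1 := by exact_mod_cast hh
  have htq : (t : ℚ) = n - 1 := by rw [← ht]; push_cast; ring
  refine cr_eq_of_stop (by omega) (cr_eq_ratio_of_add_eq (by omega) (by omega))
    (cr_eq_ratio_of_add_eq (by omega) (by omega)) ?_ ?_
  · rw [hq, htq]
    ring
  · push_cast
    rw [hq, ← add_div, div_div, div_le_div_iff₀ (by positivity) (by positivity)]
    nlinarith

theorem cr_at_4_0 {n h t : ℕ} (hh : h = n + 2) (ht : t + 2 = n) :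
    cr (2 * n + 1) h t = (n + 2) / (2 * n) := by
  have hn : (2 : ℚ) ≤ n := by exact_mod_cast (by omega : 2 ≤ n)
  have hq : (h : ℚ) = n + 2 := by exact_mod_cast hh
  have htq : (t : ℚ) = n - 2 := by rw [← ht]; push_cast; ring
  refine cr_eq_of_stop (by omega) (cr_eq_ratio_of_add_eq (by omega) (by omega))
    (cr_eq_ratio_of_add_eq (by omega) (by omega)) ?_ ?_
  · rw [hq, htq]
    ring
  · push_cast
    rw [hq, ← add_div, div_div, div_le_div_iff₀ (by positivity) (by positivity)]
    nlinarith

theorem cr_at_1_2 {n h t : ℕ} (hh : h + 1 = n) (ht : t = n) :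
    cr (2 * n + 1) h t = (8 * n + 5) / (16 * n + 8) := by
  have hq : (h : ℚ) = n - 1 := by rw [← hh]; push_cast; ring
  have htq : (t : ℚ) = n := by exact_mod_cast ht
  refine cr_eq_of_continue (by omega) (cr_at_2_2 (by omega) ht)
    (cr_eq_half_of_le_two_mul (by omega) (by omega)) ?_ ?_
  · rw [div_add_div _ _ (by positivity) two_ne_zero, div_div,
      div_eq_div_iff (by positivity) (by positivity)]
    ring
  · rw [hq, htq, div_le_div_iff₀ (by linarith) (by positivity)]
    nlinarith

theorem cr_at_2_1 {n h t : ℕ} (hh : h = n) (ht : t + 1 = n) (hn : 3 ≤ n) :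
    cr (2 * n + 1) h t = (8 * n ^ 2 + 9 * n + 2) / (16 * n ^ 2 + 8 * n) := by
  have hnq : (3 : ℚ) ≤ n := by exact_mod_cast hn
  have hq : (h : ℚ) = n := by exact_mod_cast hh
  have htq : (t : ℚ) = n - 1 := by rw [← ht]; push_cast; ring
  refine cr_eq_of_continue (by omega) (cr_at_3_1 (by omega) ht) (cr_at_2_2 hh (by omega)) ?_ ?_
  · rw [div_add_div _ _ (by positivity) (by positivity), div_div,
      div_eq_div_iff (by positivity) (by positivity)]
    ring
  · rw [hq, htq, div_le_div_iff₀ (by linarith) (by positivity)]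
    nlinarith

theorem cr_at_3_0 {n h t : ℕ} (hh : h = n + 1) (ht : t + 2 = n) :
    cr (2 * n + 1) h t = (n + 1) / (2 * n - 1) := by
  have hn : (2 : ℚ) ≤ n := by exact_mod_cast (by omega : 2 ≤ n)
  have hq : (h : ℚ) = n + 1 := by exact_mod_cast hh
  have htq : (t : ℚ) = n - 2 := by rw [← ht]; push_cast; ring
  refine cr_eq_of_stop (by omega) (cr_at_4_0 (by omega) ht) (cr_at_3_1 hh (by omega)) ?_ ?_
  · rw [hq, htq]
    ring
  · rw [← add_div, div_div, div_le_div_iff₀ (by positivity) (by linarith)]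
    nlinarith

theorem cr_at_0_2 {n h t : ℕ} (hh : h + 2 = n) (ht : t = n) :
    cr (2 * n + 1) h t = (16 * n + 9) / (32 * n + 16) := by
  have hq : (h : ℚ) = n - 2 := by rw [← hh]; push_cast; ring
  have htq : (t : ℚ) = n := by exact_mod_cast ht
  refine cr_eq_of_continue (by omega) (cr_at_1_2 (by omega) ht)
    (cr_eq_half_of_le_two_mul (by omega) (by omega)) ?_ ?_
  · rw [div_add_div _ _ (by positivity) two_ne_zero, div_div,
      div_eq_div_iff (by positivity) (by positivity)]
    ring
  · rw [hq, htq, div_le_div_iff₀ (by linarith) (by positivity)]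
    nlinarith

theorem cr_at_1_1 {n h t : ℕ} (hh : h + 1 = n) (ht : t + 1 = n) (hn : 3 ≤ n) :
    cr (2 * n + 1) h t = (8 * n ^ 2 + 7 * n + 1) / (16 * n ^ 2 + 8 * n) := by
  have hnq : (3 : ℚ) ≤ n := by exact_mod_cast hn
  have hq : (h : ℚ) = n - 1 := by rw [← hh]; push_cast; ring
  have htq : (t : ℚ) = n - 1 := by rw [← ht]; push_cast; ring
  refine cr_eq_of_continue (by omega) (cr_at_2_1 (by omega) ht (by omega))
    (cr_at_1_2 hh (by omega)) ?_ ?_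
  · rw [div_add_div _ _ (by positivity) (by positivity), div_div,
      div_eq_div_iff (by positivity) (by positivity)]
    ring
  · rw [hq, htq, div_le_div_iff₀ (by linarith) (by positivity)]
    nlinarith

theorem cr_at_2_0 {n h t : ℕ} (hh : h = n) (ht : t + 2 = n) (hn : 12 ≤ n) :
    cr (2 * n + 1) h t = (32 * n ^ 3 + 34 * n ^ 2 + 3 * n - 2) / (64 * n ^ 3 - 16 * n) := by
  have hnq : (12 : ℚ) ≤ n := by exact_mod_cast hn
  have hq : (h : ℚ) = n := by exact_mod_cast hh
  have htq : (t : ℚ) = n - 2 := by rw [← ht]; push_cast; ring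
  have hden : (0 : ℚ) < 64 * n ^ 3 - 16 * n := by
    nlinarith [mul_pos (by linarith : (0 : ℚ) < n) (by nlinarith : (0 : ℚ) < 4 * n ^ 2 - 1)]
  refine cr_eq_of_continue (by omega) (cr_at_3_0 (by omega) ht)
    (cr_at_2_1 hh (by omega) (by omega)) ?_ ?_
  · rw [div_add_div _ _ (by linarith) (by positivity), div_div,
      div_eq_div_iff (by nlinarith) hden.ne']
    ring
  · rw [hq, htq, div_le_div_iff₀ (by linarith) hden]
    nlinarith

theorem cr_at_0_1 {n h t : ℕ} (hh : h + 2 = n) (ht : t + 1 = n) (hn : 3 ≤ n) :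
    cr (2 * n + 1) h t = (32 * n ^ 2 + 23 * n + 2) / (64 * n ^ 2 + 32 * n) := by
  have hnq : (3 : ℚ) ≤ n := by exact_mod_cast hn
  have hq : (h : ℚ) = n - 2 := by rw [← hh]; push_cast; ring
  have htq : (t : ℚ) = n - 1 := by rw [← ht]; push_cast; ring
  refine cr_eq_of_continue (by omega) (cr_at_1_1 (by omega) ht (by omega))
    (cr_at_0_2 hh (by omega)) ?_ ?_
  · rw [div_add_div _ _ (by positivity) (by positivity), div_div,
      div_eq_div_iff (by positivity) (by positivity)]
    ring
  · rw [hq, htq, div_le_div_iff₀ (by linarith) (by positivity)]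
    nlinarith

theorem cr_at_1_0 {n h t : ℕ} (hh : h + 1 = n) (ht : t + 2 = n) (hn : 12 ≤ n) :
    cr (2 * n + 1) h t = (64 * n ^ 3 + 46 * n ^ 2 - 7 * n - 4) / (128 * n ^ 3 - 32 * n) := by
  have hnq : (12 : ℚ) ≤ n := by exact_mod_cast hn
  have hq : (h : ℚ) = n - 1 := by rw [← hh]; push_cast; ring
  have htq : (t : ℚ) = n - 2 := by rw [← ht]; push_cast; ring
  have hden : (0 : ℚ) < 128 * n ^ 3 - 32 * n := by
    nlinarith [mul_pos (by linarith : (0 : ℚ) < n) (by nlinarith : (0 : ℚ) < 4 * n ^ 2 - 1)]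
  refine cr_eq_of_continue (by omega) (cr_at_2_0 (by omega) ht (by omega))
    (cr_at_1_1 hh (by omega) (by omega)) ?_ ?_
  · rw [div_add_div _ _ (by nlinarith) (by positivity), div_div,
      div_eq_div_iff (by nlinarith) hden.ne']
    ring
  · rw [hq, htq, div_le_div_iff₀ (by linarith) hden]
    nlinarith

theorem cr_at_0_0 {n h t : ℕ} (hh : h + 2 = n) (ht : t + 2 = n) (hn : 12 ≤ n) :
    cr (2 * n + 1) h t = (64 * n ^ 3 + 30 * n ^ 2 - 13 * n - 3) / (128 * n ^ 3 - 32 * n) := by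
  have hnq : (12 : ℚ) ≤ n := by exact_mod_cast hn
  have hq : (h : ℚ) = n - 2 := by rw [← hh]; push_cast; ring
  have htq : (t : ℚ) = n - 2 := by rw [← ht]; push_cast; ring
  have hden : (0 : ℚ) < 128 * n ^ 3 - 32 * n := by
    nlinarith [mul_pos (by linarith : (0 : ℚ) < n) (by nlinarith : (0 : ℚ) < 4 * n ^ 2 - 1)]
  refine cr_eq_of_continue (by omega) (cr_at_1_0 (by omega) ht hn)
    (cr_at_0_1 hh (by omega) (by omega)) ?_ ?_
  · rw [div_add_div _ _ hden.ne' (by positivity), div_div,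
      div_eq_div_iff (by nlinarith) hden.ne']
    ring
  · rw [hq, htq, div_le_div_iff₀ (by linarith) hden]
    nlinarith

theorem cr_m5_am2 (n : ℕ) (hn : 102 ≤ n) :
    cr (2 * n + 1) (n - 2) (n - 2) =
      (64 * (n : ℚ)^3 + 30 * (n : ℚ)^2 - 13 * (n : ℚ) - 3) /
        (128 * (n : ℚ)^3 - 32 * (n : ℚ)) :=
  cr_at_0_0 (by omega) (by omega) (by omega)
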